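/- If S is a separating time for (P, Q), then the following are equivalent: (a) P ⊥ Q on F_0; (b) P(S = 0) = 1 and Q(S = 0) = 1; (c) P(S = 0) = 1. -/

import Mathlib

/-!
Apply the separating property at the constant stopping time `τ ≡ 0`. An `F_0`-set inside
`{S > 0}` is `P`-null iff it is `Q`-null, so a set in `F_0` separating `P` from `Q` forces
`{S > 0}` to be null for both. Conversely `P` and `Q` are singular on `F_0 ∩ {S = 0}`, which
carries all of `P` once `P(S = 0) = 1`.
-/

open MeasureTheory
open scoped ENNReal

namespace SepTime

variable {Ω : Type*}

/-- A `[0,∞]`-valued stopping time: `{τ ≤ t} ∈ F_t` for all `t ∈ [0,∞]`. -/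
def IsStopTime (F : ℝ≥0∞ → MeasurableSpace Ω) (τ : Ω → ℝ≥0∞) : Prop :=
  ∀ t : ℝ≥0∞, MeasurableSet[F t] {ω | τ ω ≤ t}

/-- An extended stopping time, with values in `[0,∞] ∪ {δ}`, modeled as `WithTop ℝ≥0∞`
where `δ = ⊤`. -/
def IsExtStopTime (F : ℝ≥0∞ → MeasurableSpace Ω) (S : Ω → WithTop ℝ≥0∞) : Prop :=
  ∀ t : ℝ≥0∞, MeasurableSet[F t] {ω | S ω ≤ (t : WithTop ℝ≥0∞)}

/-- Membership in the stopped σ-field `F_τ = {A ∈ F : A ∩ {τ ≤ t} ∈ F_t for all t}`. -/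
def MemStoppedSigma (m : MeasurableSpace Ω) (F : ℝ≥0∞ → MeasurableSpace Ω)
    (τ : Ω → ℝ≥0∞) (A : Set Ω) : Prop :=
  MeasurableSet[m] A ∧ ∀ t : ℝ≥0∞, MeasurableSet[F t] (A ∩ {ω | τ ω ≤ t})

/-- `P ∼ Q` on the trace σ-field `F_τ ∩ A`. -/
def EquivOnTrace (m : MeasurableSpace Ω) (F : ℝ≥0∞ → MeasurableSpace Ω)
    (P Q : @Measure Ω m) (τ : Ω → ℝ≥0∞) (A : Set Ω) : Prop :=
  ∀ B : Set Ω, MemStoppedSigma m F τ B → B ⊆ A → (P B = 0 ↔ Q B = 0)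

/-- `P ⊥ Q` on the trace σ-field `F_τ ∩ A`. -/
def SingOnTrace (m : MeasurableSpace Ω) (F : ℝ≥0∞ → MeasurableSpace Ω)
    (P Q : @Measure Ω m) (τ : Ω → ℝ≥0∞) (A : Set Ω) : Prop :=
  ∃ B : Set Ω, MemStoppedSigma m F τ B ∧ B ⊆ A ∧ P (A \ B) = 0 ∧ Q B = 0

/-- `S` is a separating time for `(P, Q)`: for every stopping time `τ`,
`P ∼ Q` on `F_τ ∩ {τ < S}` and `P ⊥ Q` on `F_τ ∩ {τ ≥ S}`. -/
def IsSepTime (m : MeasurableSpace Ω) (F : ℝ≥0∞ → MeasurableSpace Ω)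
    (P Q : @Measure Ω m) (S : Ω → WithTop ℝ≥0∞) : Prop :=
  ∀ τ : Ω → ℝ≥0∞, IsStopTime F τ →
    EquivOnTrace m F P Q τ {ω | (τ ω : WithTop ℝ≥0∞) < S ω} ∧
    SingOnTrace m F P Q τ {ω | S ω ≤ (τ ω : WithTop ℝ≥0∞)}

/-- Right-continuity of the filtration: `F_t = ⋂_{s > t} F_s`. -/
def RightContinuousFiltration (F : ℝ≥0∞ → MeasurableSpace Ω) : Prop :=
  ∀ t : ℝ≥0∞, t ≠ ∞ → F t = ⨅ s ∈ Set.Ioi t, F s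

end SepTime

lemma prob_setOf_le_eq_one_iff {Ω α : Type*} [MeasurableSpace Ω] [LinearOrder α]
    {μ : Measure Ω} [IsProbabilityMeasure μ] {f : Ω → α} {a : α} (hf : MeasurableSet {ω | f ω ≤ a}) :
    μ {ω | f ω ≤ a} = 1 ↔ μ {ω | a < f ω} = 0 := by
  simpa only [Set.compl_ofPred, not_le] using (prob_compl_eq_zero_iff hf).symm

namespace SepTime

variable {Ω : Type*}

lemma isStopTime_const (F : ℝ≥0∞ → MeasurableSpace Ω) (c : ℝ≥0∞) :
    IsStopTime F fun _ => c := by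
  intro t
  by_cases hct : c ≤ t <;> simp [hct]

variable [m : MeasurableSpace Ω] {F : ℝ≥0∞ → MeasurableSpace Ω}

lemma MemStoppedSigma.measurableSet_of_const {c : ℝ≥0∞} {B : Set Ω}
    (hB : MemStoppedSigma m F (fun _ => c) B) : MeasurableSet[F c] B := by
  simpa using hB.2 c

lemma memStoppedSigma_const (hmono : Monotone F) (hle : ∀ t, F t ≤ m) {c : ℝ≥0∞}
    {B : Set Ω} (hB : MeasurableSet[F c] B) : MemStoppedSigma m F (fun _ => c) B := by
  refine ⟨hle c _ hB, fun t => ?_⟩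
  by_cases hct : c ≤ t
  · simpa [hct] using hmono hct _ hB
  · simp [hct]

namespace IsSepTime

variable {P Q : Measure Ω} {S : Ω → WithTop ℝ≥0∞}

lemma measure_eq_zero_iff_of_subset_lt (hsep : IsSepTime m F P Q S) (hmono : Monotone F)
    (hle : ∀ t, F t ≤ m) {c : ℝ≥0∞} {B : Set Ω} (hB : MeasurableSet[F c] B)
    (hBS : B ⊆ {ω | (c : WithTop ℝ≥0∞) < S ω}) : P B = 0 ↔ Q B = 0 :=
  (hsep _ (isStopTime_const F c)).1 B (memStoppedSigma_const hmono hle hB) hBS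

lemma exists_singular_le (hsep : IsSepTime m F P Q S) (c : ℝ≥0∞) :
    ∃ B : Set Ω, MeasurableSet[F c] B ∧ B ⊆ {ω | S ω ≤ c} ∧
      P ({ω | S ω ≤ c} \ B) = 0 ∧ Q B = 0 := by
  obtain ⟨B, hB, hBS, hPB, hQB⟩ := (hsep _ (isStopTime_const F c)).2
  exact ⟨B, hB.measurableSet_of_const, hBS, hPB, hQB⟩

lemma measure_lt_eq_zero_of_singular (hsep : IsSepTime m F P Q S) (hmono : Monotone F)
    (hle : ∀ t, F t ≤ m) (hS : IsExtStopTime F S) {c : ℝ≥0∞} {B : Set Ω}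
    (hB : MeasurableSet[F c] B) (hPB : P B = 0) (hQB : Q Bᶜ = 0) :
    P {ω | (c : WithTop ℝ≥0∞) < S ω} = 0 ∧ Q {ω | (c : WithTop ℝ≥0∞) < S ω} = 0 := by
  set L := {ω | (c : WithTop ℝ≥0∞) < S ω}
  have hL : MeasurableSet[F c] L := by
    simpa only [L, Set.compl_ofPred, not_le] using (hS c).compl
  have hPL : P (Bᶜ ∩ L) = 0 :=
    (hsep.measure_eq_zero_iff_of_subset_lt hmono hle (hB.compl.inter hL)
      Set.inter_subset_right).2 (measure_mono_null Set.inter_subset_left hQB)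
  have hQL : Q (B ∩ L) = 0 :=
    (hsep.measure_eq_zero_iff_of_subset_lt hmono hle (hB.inter hL)
      Set.inter_subset_right).1 (measure_mono_null Set.inter_subset_left hPB)
  constructor
  · refine measure_mono_null (fun ω hω => ?_) (measure_union_null hPB hPL)
    by_cases hωB : ω ∈ B
    exacts [Or.inl hωB, Or.inr ⟨hωB, hω⟩]
  · refine measure_mono_null (fun ω hω => ?_) (measure_union_null hQB hQL)
    by_cases hωB : ω ∈ B
    exacts [Or.inr ⟨hωB, hω⟩, Or.inl hωB]

lemma exists_singular_of_measure_lt_eq_zero (hsep : IsSepTime m F P Q S) {c : ℝ≥0∞}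
    (hP : P {ω | (c : WithTop ℝ≥0∞) < S ω} = 0) :
    ∃ B : Set Ω, MeasurableSet[F c] B ∧ P B = 0 ∧ Q Bᶜ = 0 := by
  obtain ⟨B, hB, -, hPB, hQB⟩ := hsep.exists_singular_le c
  refine ⟨Bᶜ, hB.compl, measure_mono_null (fun ω hω => ?_) (measure_union_null hP hPB),
    by rwa [compl_compl]⟩
  by_cases hωc : S ω ≤ c
  exacts [Or.inr ⟨hωc, hω⟩, Or.inl (not_le.1 hωc)]

end IsSepTime
end SepTime

theorem mutuallySingular_on_F0_iff_separatingTime_eq_zero_general {Ω : Type*} [m : MeasurableSpace Ω]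
    (F : ℝ≥0∞ → MeasurableSpace Ω) (hmono : Monotone F) (hle : ∀ t, F t ≤ m)
    (P Q : Measure Ω) [IsProbabilityMeasure P] [IsProbabilityMeasure Q]
    (S : Ω → WithTop ℝ≥0∞)
    (hS : SepTime.IsExtStopTime F S)
    (hsep : SepTime.IsSepTime m F P Q S) :
    ((∃ B : Set Ω, MeasurableSet[F 0] B ∧ P B = 0 ∧ Q Bᶜ = 0) ↔
      (P {ω | S ω = ((0 : ℝ≥0∞) : WithTop ℝ≥0∞)} = 1 ∧
       Q {ω | S ω = ((0 : ℝ≥0∞) : WithTop ℝ≥0∞)} = 1)) ∧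
    ((∃ B : Set Ω, MeasurableSet[F 0] B ∧ P B = 0 ∧ Q Bᶜ = 0) ↔
      P {ω | S ω = ((0 : ℝ≥0∞) : WithTop ℝ≥0∞)} = 1) := by
  have hZ : {ω | S ω = ((0 : ℝ≥0∞) : WithTop ℝ≥0∞)} =
      {ω | S ω ≤ ((0 : ℝ≥0∞) : WithTop ℝ≥0∞)} := by
    ext ω
    simp
  have hZm : MeasurableSet {ω | S ω ≤ ((0 : ℝ≥0∞) : WithTop ℝ≥0∞)} := hle 0 _ (hS 0)
  rw [hZ, prob_setOf_le_eq_one_iff hZm, prob_setOf_le_eq_one_iff hZm]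
  have hab : (∃ B : Set Ω, MeasurableSet[F 0] B ∧ P B = 0 ∧ Q Bᶜ = 0) →
      P {ω | ((0 : ℝ≥0∞) : WithTop ℝ≥0∞) < S ω} = 0 ∧
        Q {ω | ((0 : ℝ≥0∞) : WithTop ℝ≥0∞) < S ω} = 0 := fun ⟨_, hB, hPB, hQB⟩ =>
    hsep.measure_lt_eq_zero_of_singular hmono hle hS hB hPB hQB
  exact ⟨⟨hab, fun h => hsep.exists_singular_of_measure_lt_eq_zero h.1⟩,
    ⟨fun h => (hab h).1, hsep.exists_singular_of_measure_lt_eq_zero⟩⟩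

/-- If `S` is a separating time for `(P, Q)`, the following are equivalent:
(a) `P ⊥ Q` on `F_0`; (b) `P(S = 0) = 1` and `Q(S = 0) = 1`; (c) `P(S = 0) = 1`. -/
theorem mutuallySingular_on_F0_iff_separatingTime_eq_zero {Ω : Type*} [m : MeasurableSpace Ω]
    (F : ℝ≥0∞ → MeasurableSpace Ω) (hmono : Monotone F) (hle : ∀ t, F t ≤ m)
    (hrc : SepTime.RightContinuousFiltration F)
    (P Q : Measure Ω) [IsProbabilityMeasure P] [IsProbabilityMeasure Q]
    (S : Ω → WithTop ℝ≥0∞)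
    (hS : SepTime.IsExtStopTime F S)
    (hsep : SepTime.IsSepTime m F P Q S) :
    ((∃ B : Set Ω, MeasurableSet[F 0] B ∧ P B = 0 ∧ Q Bᶜ = 0) ↔
      (P {ω | S ω = ((0 : ℝ≥0∞) : WithTop ℝ≥0∞)} = 1 ∧
       Q {ω | S ω = ((0 : ℝ≥0∞) : WithTop ℝ≥0∞)} = 1)) ∧
    ((∃ B : Set Ω, MeasurableSet[F 0] B ∧ P B = 0 ∧ Q Bᶜ = 0) ↔
      P {ω | S ω = ((0 : ℝ≥0∞) : WithTop ℝ≥0∞)} = 1) :=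
  mutuallySingular_on_F0_iff_separatingTime_eq_zero_general (m := m) F hmono hle P Q S hS hsep
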